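/- Every linear threshold function f : {-1,1}^n → {-1,1} satisfies I[f] ≤ E_x[ |x_1 + ... + x_n| ], where x is uniform on {-1,1}^n. Moreover, for odd n, equality holds for the majority function MAJ_n(x) = sgn(x_1 + ... + x_n); hence for odd n, I[f] ≤ I[MAJ_n] for every LTF f on n variables. -/
import Mathlib


open Finset
open scoped Classical

noncomputable section

/-- The Boolean cube `{-1,1}^V` as a finset of functions `V → ℤ`. -/
def cube (V : Type*) [Fintype V] [DecidableEq V] : Finset (V → ℤ) :=
  Fintype.piFinset fun _ => ({-1, 1} : Finset ℤ)

/-- Negate the `i`-th coordinate. -/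
def flipAt {V : Type*} [DecidableEq V] (x : V → ℤ) (i : V) : V → ℤ :=
  Function.update x i (-(x i))

/-- Influence of coordinate `i` on `f`: the probability over a uniform point of the cube
that flipping coordinate `i` changes the value of `f`. -/
def coordInf {V : Type*} [Fintype V] [DecidableEq V] {α : Type*} (f : (V → ℤ) → α) (i : V) : ℝ :=
  (∑ x ∈ cube V, if f x ≠ f (flipAt x i) then (1 : ℝ) else 0) / (cube V).card

/-- Total influence of `f`. -/
def totalInf {V : Type*} [Fintype V] [DecidableEq V] {α : Type*} (f : (V → ℤ) → α) : ℝ :=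
  ∑ i : V, coordInf f i

/-- Sign function, with `sgn 0 = 0`. -/
def sgn (t : ℝ) : ℤ := if 0 < t then 1 else if t < 0 then -1 else 0

/-- A quadratic multilinear polynomial `∑_{i<j} a_{ij} x_i x_j + ∑_i b_i x_i + c`. -/
def quadPoly {V : Type*} [Fintype V] [LinearOrder V] (a : V → V → ℝ) (b : V → ℝ) (c : ℝ)
    (x : V → ℤ) : ℝ :=
  (∑ i : V, ∑ j : V, if i < j then a i j * x i * x j else 0) + (∑ i : V, b i * x i) + c

/-- `f` is a QTF supported on the graph `G`: it has a quadratic representation whose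
cross terms only involve edges of `G`, and whose polynomial is nonvanishing on the cube. -/
def IsQTFSupportedOn {V : Type*} [Fintype V] [LinearOrder V] (G : SimpleGraph V)
    (f : (V → ℤ) → ℤ) : Prop :=
  ∃ a b c, (∀ i j : V, i < j → a i j ≠ 0 → G.Adj i j) ∧
    (∀ x ∈ cube V, quadPoly a b c x ≠ 0) ∧
    (∀ x ∈ cube V, f x = sgn (quadPoly a b c x))

lemma mem_cube {V : Type*} [Fintype V] [DecidableEq V] {x : V → ℤ} :
    x ∈ cube V ↔ ∀ i, x i = -1 ∨ x i = 1 := by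
  simp [cube, Fintype.mem_piFinset]

lemma flipAt_apply_self {V : Type*} [DecidableEq V] (x : V → ℤ) (i : V) :
    flipAt x i i = -(x i) := by simp [flipAt]

lemma flipAt_mem_cube {V : Type*} [Fintype V] [DecidableEq V] {x : V → ℤ}
    (hx : x ∈ cube V) (i : V) : flipAt x i ∈ cube V := by
  rw [mem_cube] at hx ⊢
  intro j
  by_cases h : j = i
  · subst h; rw [flipAt_apply_self]; rcases hx j with h | h <;> simp [h]
  · rw [flipAt, Function.update_of_ne h]; exact hx j

lemma flipAt_flipAt {V : Type*} [DecidableEq V] (x : V → ℤ) (i : V) :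
    flipAt (flipAt x i) i = x := by
  simp [flipAt, Function.update_idem]

lemma sgn_pos {t : ℝ} (h : 0 < t) : sgn t = 1 := if_pos h

lemma sgn_neg' {t : ℝ} (h : t < 0) : sgn t = -1 := by
  rw [sgn, if_neg (by linarith), if_pos h]

lemma sgn_mem {t : ℝ} (h : t ≠ 0) : sgn t = 1 ∨ sgn t = -1 := by
  rcases lt_trichotomy t 0 with h1 | h1 | h1
  · exact Or.inr (sgn_neg' h1)
  · exact absurd h1 h
  · exact Or.inl (sgn_pos h1)

lemma sgn_mul_self {t : ℝ} (h : t ≠ 0) : (sgn t : ℝ) * t = |t| := by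
  rcases lt_trichotomy t 0 with h1 | h1 | h1
  · rw [sgn_neg' h1, abs_of_neg h1]; push_cast; ring
  · exact absurd h1 h
  · rw [sgn_pos h1, abs_of_pos h1]; push_cast; ring

/-- the real sign of coefficient `a i` -/
def epsR {n : ℕ} (a : Fin n → ℝ) (i : Fin n) : ℝ := if 0 < a i then 1 else -1

lemma sum_flip {n : ℕ} (a : Fin n → ℝ) (x : Fin n → ℤ) (i : Fin n) :
    ∑ j, a j * ((flipAt x i j : ℤ) : ℝ) = (∑ j, a j * (x j : ℝ)) - 2 * (a i * (x i : ℝ)) := by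
  rw [← Finset.add_sum_erase _ _ (Finset.mem_univ i),
      ← Finset.add_sum_erase _ (fun j => a j * ((x j : ℤ) : ℝ)) (Finset.mem_univ i)]
  have he : ∑ j ∈ Finset.univ.erase i, a j * ((flipAt x i j : ℤ) : ℝ)
      = ∑ j ∈ Finset.univ.erase i, a j * ((x j : ℤ) : ℝ) := by
    refine Finset.sum_congr rfl fun j hj => ?_
    rw [flipAt, Function.update_of_ne (Finset.ne_of_mem_erase hj)]
  rw [he, flipAt_apply_self]
  push_cast
  ring

lemma sum_indicator_eq {n : ℕ} (a₀ : ℝ) (a : Fin n → ℝ)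
    (hnz : ∀ x ∈ cube (Fin n), a₀ + ∑ i, a i * x i ≠ 0)
    (f : (Fin n → ℤ) → ℤ)
    (hf : ∀ x ∈ cube (Fin n), f x = sgn (a₀ + ∑ i, a i * x i)) (i : Fin n) :
    (∑ x ∈ cube (Fin n), if f x ≠ f (flipAt x i) then (1 : ℝ) else 0)
      = ∑ x ∈ cube (Fin n), (f x : ℝ) * (epsR a i * (x i : ℝ)) := by
  rw [← sub_eq_zero, ← Finset.sum_sub_distrib]
  refine Finset.sum_involution (fun x _ => flipAt x i) ?_ ?_
    (fun x hx => flipAt_mem_cube hx i) (fun x hx => flipAt_flipAt x i)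
  · intro x hx
    have hy : flipAt x i ∈ cube (Fin n) := flipAt_mem_cube hx i
    have hff : flipAt (flipAt x i) i = x := flipAt_flipAt x i
    by_cases hd : f x = f (flipAt x i)
    · simp only [hd, hff, ne_eq, not_true_eq_false, if_false, flipAt_apply_self]
      push_cast
      ring
    · have hd2 : f (flipAt x i) ≠ f (flipAt (flipAt x i) i) := by rw [hff]; exact fun h => hd h.symm
      simp only [ne_eq, hd, hd2, hff, flipAt_apply_self, not_false_eq_true, if_true]
      -- sign analysis
      have hLx := hnz x hx
      have hLy := hnz _ hy
      have hfx := hf x hx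
      have hfy := hf _ hy
      have hdiff : (a₀ + ∑ j, a j * ((flipAt x i j : ℤ) : ℝ))
          = (a₀ + ∑ j, a j * (x j : ℝ)) - 2 * (a i * (x i : ℝ)) := by
        rw [sum_flip]; ring
      set Lx := a₀ + ∑ j, a j * (x j : ℝ) with hLxdef
      set Ly := a₀ + ∑ j, a j * ((flipAt x i j : ℤ) : ℝ) with hLydef
      have hxi : x i = -1 ∨ x i = 1 := mem_cube.1 hx i
      rcases lt_trichotomy Lx 0 with h1 | h1 | h1
      · -- Lx < 0, so f x = -1, Ly > 0, f y = 1
        have hfx1 : f x = -1 := by rw [hfx, sgn_neg' h1]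
        have hLy1 : 0 < Ly := by
          rcases lt_trichotomy Ly 0 with h2 | h2 | h2
          · exact absurd (by rw [hfx1, hfy, sgn_neg' h2]) hd
          · exact absurd h2 hLy
          · exact h2
        have hfy1 : f (flipAt x i) = 1 := by rw [hfy, sgn_pos hLy1]
        have hax : a i * (x i : ℝ) < 0 := by
          have : Ly = Lx - 2 * (a i * (x i : ℝ)) := hdiff
          nlinarith
        have heps : epsR a i * (x i : ℝ) = -1 := by
          rcases hxi with h | h
          · have ha : 0 < a i := by rw [h] at hax; push_cast at hax; nlinarith
            rw [epsR, if_pos ha, h]; norm_num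
          · have ha : ¬ 0 < a i := by rw [h] at hax; push_cast at hax; intro hc; nlinarith
            rw [epsR, if_neg ha, h]; norm_num
        rw [hfx1, hfy1]
        push_cast
        norm_num
        linear_combination heps
      · exact absurd h1 hLx
      · -- Lx > 0
        have hfx1 : f x = 1 := by rw [hfx, sgn_pos h1]
        have hLy1 : Ly < 0 := by
          rcases lt_trichotomy Ly 0 with h2 | h2 | h2
          · exact h2
          · exact absurd h2 hLy
          · exact absurd (by rw [hfx1, hfy, sgn_pos h2]) hd
        have hfy1 : f (flipAt x i) = -1 := by rw [hfy, sgn_neg' hLy1]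
        have hax : 0 < a i * (x i : ℝ) := by
          have : Ly = Lx - 2 * (a i * (x i : ℝ)) := hdiff
          nlinarith
        have heps : epsR a i * (x i : ℝ) = 1 := by
          rcases hxi with h | h
          · have ha : ¬ 0 < a i := by rw [h] at hax; push_cast at hax; intro hc; nlinarith
            rw [epsR, if_neg ha, h]; norm_num
          · have ha : 0 < a i := by rw [h] at hax; push_cast at hax; nlinarith
            rw [epsR, if_pos ha, h]; norm_num
        rw [hfx1, hfy1]
        push_cast
        norm_num
        linear_combination -heps
  · intro x hx h
    intro hc
    have hc : flipAt x i = x := hc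
    -- flipAt x i = x is impossible since x i ≠ 0
    have : flipAt x i i = x i := by rw [hc]
    rw [flipAt_apply_self] at this
    rcases mem_cube.1 hx i with h | h <;> rw [h] at this <;> omega

lemma totalInf_eq_ltf {n : ℕ} (a₀ : ℝ) (a : Fin n → ℝ)
    (hnz : ∀ x ∈ cube (Fin n), a₀ + ∑ i, a i * x i ≠ 0)
    (f : (Fin n → ℤ) → ℤ)
    (hf : ∀ x ∈ cube (Fin n), f x = sgn (a₀ + ∑ i, a i * x i)) :
    totalInf f
      = (∑ x ∈ cube (Fin n), (f x : ℝ) * ∑ i, epsR a i * (x i : ℝ)) / (cube (Fin n)).card := by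
  unfold totalInf coordInf
  rw [← Finset.sum_div]
  congr 1
  have hite : ∀ (p : Prop) (h1 h2 : Decidable p), (@ite ℝ p h1 1 0) = (@ite ℝ p h2 1 0) :=
    fun p h1 h2 => by congr
  refine Eq.trans (Finset.sum_congr rfl fun i _ =>
    Eq.trans (Finset.sum_congr rfl fun x _ => hite _ _ _)
      (sum_indicator_eq a₀ a hnz f hf i)) (Eq.trans Finset.sum_comm ?_)
  simp [Finset.mul_sum]

lemma sum_abs_eps {n : ℕ} (a : Fin n → ℝ) :
    ∑ x ∈ cube (Fin n), |∑ i, epsR a i * (x i : ℝ)|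
      = ∑ x ∈ cube (Fin n), |∑ i, (x i : ℝ)| := by
  set e : Fin n → ℤ := fun i => if 0 < a i then 1 else -1 with he
  have hcast : ∀ (i : Fin n) (x : Fin n → ℤ), epsR a i * (x i : ℝ) = ((e i * x i : ℤ) : ℝ) := by
    intro i x
    by_cases h : 0 < a i
    · simp [epsR, he, h]
    · simp [epsR, he, h]
  have hmem : ∀ x ∈ cube (Fin n), (fun j => e j * x j) ∈ cube (Fin n) := by
    intro x hx
    rw [mem_cube] at hx ⊢
    intro j
    rcases hx j with h | h <;> rw [he] <;> dsimp only <;> split <;> rw [h] <;> simp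
  have hinv : ∀ x ∈ cube (Fin n), (fun j => e j * (e j * x j)) = x := by
    intro x _
    funext j
    rw [he]; dsimp only; split <;> ring
  refine Finset.sum_nbij' (i := fun x => fun j => e j * x j) (j := fun x => fun j => e j * x j)
    hmem hmem hinv hinv ?_
  intro x hx
  congr 1
  exact Finset.sum_congr rfl fun i _ => hcast i x

lemma abs_le_one_sum {n : ℕ} (f : (Fin n → ℤ) → ℤ) (hone : ∀ x ∈ cube (Fin n), |(f x : ℝ)| = 1)
    (S : (Fin n → ℤ) → ℝ) :
    ∑ x ∈ cube (Fin n), (f x : ℝ) * S x ≤ ∑ x ∈ cube (Fin n), |S x| := by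
  refine Finset.sum_le_sum fun x hx => ?_
  calc (f x : ℝ) * S x ≤ |(f x : ℝ) * S x| := le_abs_self _
    _ = |S x| := by rw [abs_mul, hone x hx, one_mul]

lemma sum_ne_zero_of_odd {n : ℕ} (hn : Odd n) {x : Fin n → ℤ} (hx : x ∈ cube (Fin n)) :
    (∑ i, (x i : ℝ)) ≠ 0 := by
  have hint : (∑ i, x i) ≠ 0 := by
    intro h
    have h2 : ((∑ i, x i : ℤ) : ZMod 2) = 1 := by
      push_cast
      have : ∀ i : Fin n, ((x i : ZMod 2)) = 1 := by
        intro i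
        rcases mem_cube.1 hx i with h' | h' <;> rw [h'] <;> decide
      rw [Finset.sum_congr rfl fun i _ => this i]
      simp only [Finset.sum_const, Finset.card_univ, Fintype.card_fin, nsmul_eq_mul, mul_one]
      rw [← ZMod.natCast_mod, Nat.odd_iff.1 hn]
      rfl
    rw [h] at h2
    exact absurd h2 (by decide)
  intro h
  apply hint
  exact_mod_cast (by push_cast at h ⊢; exact h : ((∑ i, x i : ℤ) : ℝ) = 0)


/-- Every LTF `f` satisfies `I[f] ≤ E_x[|x_1 + ⋯ + x_n|]`; moreover, for odd `n` the
majority function attains this bound with equality, hence `I[f] ≤ I[MAJ_n]` for every LTF. -/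
theorem ltf_influence_le_majority {n : ℕ} (a₀ : ℝ) (a : Fin n → ℝ)
    (hnz : ∀ x ∈ cube (Fin n), a₀ + ∑ i, a i * x i ≠ 0)
    (f : (Fin n → ℤ) → ℤ)
    (hf : ∀ x ∈ cube (Fin n), f x = sgn (a₀ + ∑ i, a i * x i)) :
    totalInf f ≤ (∑ x ∈ cube (Fin n), |∑ i, (x i : ℝ)|) / (cube (Fin n)).card ∧
    (Odd n →
      totalInf (fun x : Fin n → ℤ => sgn (∑ i, (x i : ℝ))) =
        (∑ x ∈ cube (Fin n), |∑ i, (x i : ℝ)|) / (cube (Fin n)).card ∧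
      totalInf f ≤ totalInf (fun x : Fin n → ℤ => sgn (∑ i, (x i : ℝ)))) := by
  have hcard : (0 : ℝ) < (cube (Fin n)).card := by
    have h1 : (fun _ : Fin n => (1 : ℤ)) ∈ cube (Fin n) := mem_cube.2 fun i => Or.inr rfl
    exact_mod_cast Finset.card_pos.2 ⟨_, h1⟩
  have hone : ∀ x ∈ cube (Fin n), |(f x : ℝ)| = 1 := by
    intro x hx
    rcases sgn_mem (hnz x hx) with h | h <;> rw [hf x hx, h] <;> norm_num
  have hmain : totalInf f ≤ (∑ x ∈ cube (Fin n), |∑ i, (x i : ℝ)|) / (cube (Fin n)).card := by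
    rw [totalInf_eq_ltf a₀ a hnz f hf, ← sum_abs_eps a]
    have := abs_le_one_sum f hone (fun x => ∑ i, epsR a i * (x i : ℝ))
    gcongr
  refine ⟨hmain, fun hn => ?_⟩
  have hnzM : ∀ x ∈ cube (Fin n), (0 : ℝ) + ∑ i, (1 : ℝ) * (x i : ℝ) ≠ 0 := by
    intro x hx
    simpa using sum_ne_zero_of_odd hn hx
  have hfM : ∀ x ∈ cube (Fin n),
      (fun x : Fin n → ℤ => sgn (∑ i, (x i : ℝ))) x = sgn ((0 : ℝ) + ∑ i, 1 * (x i : ℝ)) := by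
    intro x _
    simp only [one_mul, zero_add]
  have hEq : totalInf (fun x : Fin n → ℤ => sgn (∑ i, (x i : ℝ)))
      = (∑ x ∈ cube (Fin n), |∑ i, (x i : ℝ)|) / (cube (Fin n)).card := by
    rw [totalInf_eq_ltf 0 (fun _ => 1) hnzM _ hfM]
    congr 1
    refine Finset.sum_congr rfl fun x hx => ?_
    have he : (∑ i, epsR (fun _ => (1 : ℝ)) i * (x i : ℝ)) = ∑ i, (x i : ℝ) :=
      Finset.sum_congr rfl fun i _ => by rw [epsR, if_pos one_pos, one_mul]
    rw [he]
    exact sgn_mul_self (sum_ne_zero_of_odd hn hx)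
  exact ⟨hEq, hEq ▸ hmain⟩
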